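/- arXiv:2412.00943 — 6 statements merged into one kernel-verified Lean document; each statement's English description precedes it below -/
import Mathlib

section
/- There exists a finite probability space X with a distribution D over X × {0,1} and a predictor f : X → [0,1] such that f is perfectly calibrated (for every value r in the range of f, the conditional expectation of the label given f(x) = r equals r), yet every thresholded classifier f_θ(x) = 1[f(x) ≥ θ] has expected 0/1-loss equal to 1/2, strictly greater than the Bayes loss of D (which is 0). -/
open Finset

noncomputable def lmass {n : ℕ} (μ f : Fin n → ℝ) (r : ℝ) : ℝ :=
  ∑ x ∈ univ.filter (fun x => f x = r), μ x

noncomputable def lavg {n : ℕ} (μ η f : Fin n → ℝ) (r : ℝ) : ℝ :=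
  (∑ x ∈ univ.filter (fun x => f x = r), μ x * η x) / lmass μ f r

/-- `f` is calibrated w.r.t. marginal `μ` and regression function `η`:
on the support, `f x` equals the conditional label expectation on its level set. -/
def Calibrated {n : ℕ} (μ η f : Fin n → ℝ) : Prop :=
  ∀ x, 0 < μ x → f x = lavg μ η f (f x)

/-- expected 0/1-loss of a classifier `h` under marginal `μ` and regression function `η`. -/
noncomputable def loss01 {n : ℕ} (μ η : Fin n → ℝ) (h : Fin n → Bool) : ℝ :=
  ∑ x, μ x * (if h x then (1 - η x) else η x)

/-- thresholded classifier `f_θ`. -/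
noncomputable def thresh {n : ℕ} (f : Fin n → ℝ) (θ : ℝ) : Fin n → Bool :=
  fun x => decide (θ ≤ f x)

/-- collision probability `Pr_{x,x' iid ~ μ}[f x = f x']`. -/
noncomputable def collision {n : ℕ} (μ f : Fin n → ℝ) : ℝ :=
  ∑ x, ∑ x', if f x = f x' then μ x * μ x' else 0

/-- probabilistic count. -/
noncomputable def pcount {n : ℕ} (μ f : Fin n → ℝ) : ℝ := 1 / collision μ f

/-- `p`-th power of the L_p expected calibration error. -/
noncomputable def cepPow {n : ℕ} (p : ℕ) (μ η f : Fin n → ℝ) : ℝ :=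
  ∑ x, μ x * |f x - lavg μ η f (f x)| ^ p

/-- mean squared error `E[(y - f x)^2]`. -/
noncomputable def mse {n : ℕ} (μ η f : Fin n → ℝ) : ℝ :=
  ∑ x, μ x * (η x * (1 - f x) ^ 2 + (1 - η x) * (f x) ^ 2)

/-- average label assignment. -/
noncomputable def fbar {n : ℕ} (μ η f : Fin n → ℝ) : Fin n → ℝ :=
  fun x => lavg μ η f (f x)

/-- strict monotonicity of `f` w.r.t. `η` on the support of `μ`. -/
def StrictMonoWrt {n : ℕ} (μ η f : Fin n → ℝ) : Prop :=
  ∀ x x', 0 < μ x → 0 < μ x' →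
    0 ≤ (η x - η x') * (f x - f x') ∧
      ((η x - η x') * (f x - f x') = 0 → η x = η x')

theorem stmt0 :
    ∃ (n : ℕ) (μ η f : Fin n → ℝ),
      (∀ x, 0 ≤ μ x) ∧ (∑ x, μ x) = 1 ∧
      (∀ x, η x ∈ Set.Icc (0:ℝ) 1) ∧ (∀ x, f x ∈ Set.Icc (0:ℝ) 1) ∧
      Calibrated μ η f ∧
      (∀ θ : ℝ, loss01 μ η (thresh f θ) = 1 / 2) ∧
      (∃ h : Fin n → Bool, loss01 μ η h = 0) ∧
      (∀ h : Fin n → Bool, 0 ≤ loss01 μ η h) := by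

  refine ⟨2, fun _ => 1/2, fun x => if x = 0 then 0 else 1, fun _ => 1/2,
    fun _ => by norm_num, by simp [Fin.sum_univ_two], ?_, ?_, ?_, ?_, ?_, ?_⟩
  · intro x; by_cases h : x = 0 <;> simp [h] <;> norm_num
  · intro x; norm_num
  · intro x _
    simp [lavg, lmass, Fin.sum_univ_two]
  · intro θ
    simp [loss01, thresh, Fin.sum_univ_two]
  · refine ⟨fun x => decide (x ≠ 0), ?_⟩
    simp [loss01, Fin.sum_univ_two]
  · intro h
    apply Finset.sum_nonneg
    intro x _
    apply mul_nonneg (by norm_num)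
    by_cases hx : x = 0 <;> cases hh : h x <;> simp [hx, hh] <;> norm_num
end

section
/- Suppose D is a distribution over a finite set X × {0,1} whose regression function η_D takes at least two distinct values below 1/2 on sets of positive probability (i.e., |range(η_D) ∩ [0, 1/2)| ≥ 2). Then there exists a predictor f differing from η_D on a set of positive probability that is both perfectly calibrated and admits a threshold θ for which f_θ achieves the Bayes 0/1-loss. -/
open Finset

/-!
Pool the two low level sets `{η = a}` and `{η = b}` into one: on their union predict the
average label over the union, elsewhere predict `η`. Every level set of the pooled predictor
has average label equal to its value, so it is calibrated. The pooled value is a proper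
average of `a` and `b`, hence differs from `a` on a set of positive mass, yet it stays below
`1/2`, so thresholding at `1/2` still reproduces the Bayes classifier `η ≥ 1/2`.
-/

section SetAvg

variable {ι : Type*} (μ η : ι → ℝ) (S : Finset ι)

noncomputable def setAvg : ℝ := (∑ y ∈ S, μ y * η y) / ∑ y ∈ S, μ y

variable {μ η S}

theorem sum_mul_sub_setAvg_eq_zero (hS : ∑ y ∈ S, μ y ≠ 0) :
    ∑ y ∈ S, μ y * (η y - setAvg μ η S) = 0 := by
  simp only [mul_sub, sum_sub_distrib, ← sum_mul, setAvg]
  field_simp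
  ring

theorem setAvg_eq_of_sum_mul_sub_eq_zero {r : ℝ} (hS : ∑ y ∈ S, μ y ≠ 0)
    (h : ∑ y ∈ S, μ y * (η y - r) = 0) : setAvg μ η S = r := by
  simp only [mul_sub, sum_sub_distrib, ← sum_mul, sub_eq_zero] at h
  rw [setAvg, h, mul_div_cancel_left₀ r hS]

theorem setAvg_le_of_forall_le {t : ℝ} (hμ0 : ∀ y ∈ S, 0 ≤ μ y) (hS : 0 < ∑ y ∈ S, μ y)
    (h : ∀ y ∈ S, η y ≤ t) : setAvg μ η S ≤ t := by
  rw [setAvg, div_le_iff₀ hS, mul_sum]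
  exact sum_le_sum fun y hy => by nlinarith [hμ0 y hy, h y hy]

end SetAvg

section Pooling

variable {n : ℕ} {μ η : Fin n → ℝ} {S : Finset (Fin n)}

noncomputable def pooled (μ η : Fin n → ℝ) (S : Finset (Fin n)) : Fin n → ℝ :=
  fun x => if x ∈ S then setAvg μ η S else η x

-- Off `S` the pooled predictor is `η`; on `S` the level set either misses `S` or contains it.
theorem sum_levelSet_pooled_mul_sub_eq_zero (hS : ∑ y ∈ S, μ y ≠ 0) (r : ℝ) :
    ∑ y ∈ univ.filter (fun y => pooled μ η S y = r), μ y * (η y - r) = 0 := by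
  rw [← sum_filter_add_sum_filter_not _ (· ∈ S)]
  have hout : ∑ y ∈ (univ.filter fun y => pooled μ η S y = r).filter (· ∉ S),
      μ y * (η y - r) = 0 :=
    sum_eq_zero fun y hy => by
      rw [mem_filter, mem_filter] at hy
      rw [← hy.1.2, pooled, if_neg hy.2, sub_self, mul_zero]
  have hin : (univ.filter fun y => pooled μ η S y = r).filter (· ∈ S) =
      S.filter fun _ => setAvg μ η S = r := by
    ext y
    rw [mem_filter, mem_filter, mem_filter]
    by_cases hy : y ∈ S <;> simp [pooled, hy]
  rw [hout, add_zero, hin]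
  by_cases hc : setAvg μ η S = r
  · rw [filter_true_of_mem fun _ _ => hc, ← hc]
    exact sum_mul_sub_setAvg_eq_zero hS
  · rw [filter_false_of_mem fun _ _ => hc, sum_empty]

theorem calibrated_pooled (hμ0 : ∀ x, 0 ≤ μ x) (hS : ∑ y ∈ S, μ y ≠ 0) :
    Calibrated μ η (pooled μ η S) := fun x hx =>
  (setAvg_eq_of_sum_mul_sub_eq_zero
    (hx.trans_le (single_le_sum (fun y _ => hμ0 y) (by simp))).ne'
    (sum_levelSet_pooled_mul_sub_eq_zero hS _)).symm

theorem thresh_pooled {θ : ℝ} (hS : ∀ y ∈ S, η y < θ) (hc : setAvg μ η S < θ) :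
    thresh (pooled μ η S) θ = thresh η θ := by
  funext x
  by_cases hx : x ∈ S
  · simp [thresh, pooled, hx, not_le.2 hc, not_le.2 (hS x hx)]
  · simp [thresh, pooled, hx]

end Pooling

theorem loss01_thresh_half_le {n : ℕ} {μ : Fin n → ℝ} (η : Fin n → ℝ) (hμ0 : ∀ x, 0 ≤ μ x)
    (h : Fin n → Bool) : loss01 μ η (thresh η (1 / 2)) ≤ loss01 μ η h := by
  refine sum_le_sum fun x _ => mul_le_mul_of_nonneg_left ?_ (hμ0 x)
  by_cases hx : 1 / 2 ≤ η x <;> cases h x <;>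
    simp only [thresh, hx, decide_true, decide_false, if_true, if_false, Bool.false_eq_true] <;>
    linarith

theorem setAvg_filter_eq_or_eq_ne_left {n : ℕ} {μ η : Fin n → ℝ} (hμ0 : ∀ x, 0 ≤ μ x) {a b : ℝ}
    (hab : a ≠ b) (hxb : ∃ x, 0 < μ x ∧ η x = b) :
    setAvg μ η (univ.filter fun x => η x = a ∨ η x = b) ≠ a := by
  obtain ⟨xb, hμb, hηb⟩ := hxb
  set S := univ.filter fun x => η x = a ∨ η x = b
  set Sb := univ.filter fun x => η x = b
  have hmass_b : 0 < ∑ y ∈ Sb, μ y :=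
    hμb.trans_le (single_le_sum (fun y _ => hμ0 y) (by simp [Sb, hηb]))
  have hmass : 0 < ∑ y ∈ S, μ y :=
    hmass_b.trans_le (sum_le_sum_of_subset_of_nonneg
      (fun y => by simp +contextual [S, Sb]) fun y _ _ => hμ0 y)
  have hdev : ∑ y ∈ S, μ y * (η y - a) = (b - a) * ∑ y ∈ Sb, μ y := by
    rw [mul_sum, sum_filter, sum_filter]
    refine sum_congr rfl fun y _ => ?_
    by_cases hy : η y = b
    · simp only [hy, or_true, if_true]
      ring
    · by_cases hy' : η y = a <;> simp [hy, hy', hab]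
  intro hc
  have h0 := sum_mul_sub_setAvg_eq_zero (η := η) hmass.ne'
  rw [hc, hdev] at h0
  exact mul_ne_zero (sub_ne_zero.2 hab.symm) hmass_b.ne' h0

theorem stmt2_general {n : ℕ} (μ η : Fin n → ℝ)
    (hμ0 : ∀ x, 0 ≤ μ x)
    (a b : ℝ) (hab : a ≠ b) (ha : a < 1 / 2) (hb : b < 1 / 2)
    (hxa : ∃ x, 0 < μ x ∧ η x = a) (hxb : ∃ x, 0 < μ x ∧ η x = b) :
    ∃ f : Fin n → ℝ,
      (∃ x, 0 < μ x ∧ f x ≠ η x) ∧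
      Calibrated μ η f ∧
      (∃ θ : ℝ, ∀ h : Fin n → Bool, loss01 μ η (thresh f θ) ≤ loss01 μ η h) := by
  obtain ⟨xa, hμa, hηa⟩ := hxa
  set S := univ.filter fun x => η x = a ∨ η x = b
  have hxaS : xa ∈ S := by simp [S, hηa]
  have hmass : 0 < ∑ y ∈ S, μ y := hμa.trans_le (single_le_sum (fun y _ => hμ0 y) hxaS)
  have hS_max : ∀ y ∈ S, η y ≤ max a b := fun y hy => by
    rcases (mem_filter.1 hy).2 with h | h <;> simp [h]
  have hc : setAvg μ η S < 1 / 2 :=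
    (setAvg_le_of_forall_le (fun y _ => hμ0 y) hmass hS_max).trans_lt (max_lt ha hb)
  refine ⟨pooled μ η S, ⟨xa, hμa, ?_⟩, calibrated_pooled hμ0 hmass.ne', 1 / 2, fun h => ?_⟩
  · simpa [pooled, hxaS, hηa] using setAvg_filter_eq_or_eq_ne_left hμ0 hab hxb
  · rw [thresh_pooled (fun y hy => (hS_max y hy).trans_lt (max_lt ha hb)) hc]
    exact loss01_thresh_half_le η hμ0 h

theorem stmt2 {n : ℕ} (μ η : Fin n → ℝ)
    (hμ0 : ∀ x, 0 ≤ μ x) (hμ1 : (∑ x, μ x) = 1)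
    (hη : ∀ x, η x ∈ Set.Icc (0:ℝ) 1)
    (a b : ℝ) (hab : a ≠ b) (ha : a < 1 / 2) (hb : b < 1 / 2)
    (hxa : ∃ x, 0 < μ x ∧ η x = a) (hxb : ∃ x, 0 < μ x ∧ η x = b) :
    ∃ f : Fin n → ℝ,
      (∃ x, 0 < μ x ∧ f x ≠ η x) ∧
      Calibrated μ η f ∧
      (∃ θ : ℝ, ∀ h : Fin n → Bool, loss01 μ η (thresh f θ) ≤ loss01 μ η h) :=
  stmt2_general μ η hμ0 a b hab ha hb hxa hxb
end

section
/- If a predictor f : X → ℝ is strictly monotonic with respect to the regression function η_D (i.e., for all x, x' in supp(D), (η_D(x) − η_D(x'))(f(x) − f(x')) ≥ 0, with equality only when η_D(x) = η_D(x')), then there exists a threshold θ ∈ ℝ such that the thresholded classifier f_θ achieves the Bayes 0/1-loss of D. -/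
open Finset

lemma loss01_le {n : ℕ} (μ η : Fin n → ℝ) (hμ0 : ∀ x, 0 ≤ μ x)
    (g h : Fin n → Bool)
    (hg : ∀ x, 0 < μ x → (g x = true → 1/2 ≤ η x) ∧ (g x = false → η x ≤ 1/2)) :
    loss01 μ η g ≤ loss01 μ η h := by
  unfold loss01
  apply Finset.sum_le_sum
  intro x _
  rcases (hμ0 x).eq_or_lt with h0 | h0
  · simp [← h0]
  · apply mul_le_mul_of_nonneg_left _ (hμ0 x)
    obtain ⟨h1, h2⟩ := hg x h0
    cases hgx : g x <;> cases hhx : h x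
    · exact le_refl _
    · have := h2 hgx; simp; linarith
    · have := h1 hgx; simp; linarith
    · exact le_refl _

theorem stmt4 {n : ℕ} (μ η f : Fin n → ℝ)
    (hμ0 : ∀ x, 0 ≤ μ x) (hμ1 : (∑ x, μ x) = 1)
    (hη : ∀ x, η x ∈ Set.Icc (0:ℝ) 1)
    (hmono : StrictMonoWrt μ η f) :
    ∃ θ : ℝ, ∀ h : Fin n → Bool, loss01 μ η (thresh f θ) ≤ loss01 μ η h := by
  classical
  set A := univ.filter (fun x => 0 < μ x ∧ 1/2 < η x) with hA
  by_cases hAne : A.Nonempty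
  · obtain ⟨a0, ha0A, ha0min⟩ := A.exists_min_image f hAne
    have ha0 : 0 < μ a0 ∧ 1/2 < η a0 := by
      simpa only [hA, mem_filter, mem_univ, true_and] using ha0A
    refine ⟨f a0, fun h => ?_⟩
    apply loss01_le μ η hμ0 _ h
    intro x hx
    constructor
    · intro ht
      have hle : f a0 ≤ f x := by
        simpa [thresh, decide_eq_true_eq] using ht
      by_contra hlt
      push_neg at hlt
      have hηlt : η x < η a0 := lt_trans hlt ha0.2
      obtain ⟨hprod, heq⟩ := hmono a0 x ha0.1 hx
      have : (η a0 - η x) * (f a0 - f x) = 0 := by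
        rcases eq_or_lt_of_le hle with he | he
        · rw [he]; ring
        · nlinarith
      exact absurd (heq this) (by linarith)
    · intro ht
      have hlt : f x < f a0 := by
        have := ht
        simp only [thresh, decide_eq_false_iff_not, not_le] at this
        exact this
      by_contra hgt
      push_neg at hgt
      have hxA : x ∈ A := by
        simp only [hA, mem_filter, mem_univ, true_and]
        exact ⟨hx, hgt⟩
      exact absurd (ha0min x hxA) (not_le.mpr hlt)
  · refine ⟨1 + ∑ x, |f x|, fun h => ?_⟩
    apply loss01_le μ η hμ0 _ h
    intro x hx
    constructor
    · intro ht
      exfalso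
      have hle : 1 + ∑ y, |f y| ≤ f x := by
        simpa [thresh, decide_eq_true_eq] using ht
      have h1 : f x ≤ |f x| := le_abs_self _
      have h2 : |f x| ≤ ∑ y, |f y| :=
        Finset.single_le_sum (fun y _ => abs_nonneg (f y)) (mem_univ x)
      linarith
    · intro _
      by_contra hgt
      push_neg at hgt
      exact hAne ⟨x, by simp only [hA, mem_filter, mem_univ, true_and]; exact ⟨hx, hgt⟩⟩
end

section
/- A predictor f : X → [0,1] equals the regression function η_D on the support of D if and only if f is both perfectly calibrated and strictly monotonic with respect to η_D. -/
open Finset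

theorem stmt5 {n : ℕ} (μ η f : Fin n → ℝ)
    (hμ0 : ∀ x, 0 ≤ μ x) (hμ1 : (∑ x, μ x) = 1)
    (hη : ∀ x, η x ∈ Set.Icc (0:ℝ) 1) (hf : ∀ x, f x ∈ Set.Icc (0:ℝ) 1) :
    (∀ x, 0 < μ x → f x = η x) ↔ (Calibrated μ η f ∧ StrictMonoWrt μ η f) := by
  constructor
  · intro h
    constructor
    · intro x hx
      unfold lavg lmass
      have hmem : x ∈ univ.filter (fun x' => f x' = f x) := by simp
      have hnum : ∑ x' ∈ univ.filter (fun x' => f x' = f x), μ x' * η x'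
          = f x * ∑ x' ∈ univ.filter (fun x' => f x' = f x), μ x' := by
        rw [Finset.mul_sum]
        apply Finset.sum_congr rfl
        intro x' hx'
        simp only [Finset.mem_filter] at hx'
        rcases eq_or_lt_of_le (hμ0 x') with h0 | h0
        · rw [← h0]; ring
        · rw [← h x' h0, hx'.2]; ring
      have hpos : 0 < ∑ x' ∈ univ.filter (fun x' => f x' = f x), μ x' :=
        Finset.sum_pos' (fun i _ => hμ0 i) ⟨x, hmem, hx⟩
      rw [hnum, mul_div_assoc, div_self hpos.ne', mul_one]
    · intro x x' hx hx'
      rw [h x hx, h x' hx']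
      refine ⟨by nlinarith [sq_nonneg (η x - η x')], fun he => by nlinarith [sq_nonneg (η x - η x')]⟩
  · rintro ⟨hcal, hmono⟩ x hx
    have hc := hcal x hx
    unfold lavg lmass at hc
    have hnum : ∑ x' ∈ univ.filter (fun x'' => f x'' = f x), μ x' * η x'
        = η x * ∑ x' ∈ univ.filter (fun x'' => f x'' = f x), μ x' := by
      rw [Finset.mul_sum]
      apply Finset.sum_congr rfl
      intro x' hx'
      simp only [Finset.mem_filter] at hx'
      rcases eq_or_lt_of_le (hμ0 x') with h0 | h0
      · rw [← h0]; ring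
      · have he : η x = η x' := (hmono x x' hx h0).2 (by rw [hx'.2]; ring)
        rw [← he]; ring
    have hpos : 0 < ∑ x' ∈ univ.filter (fun x'' => f x'' = f x), μ x' :=
      Finset.sum_pos' (fun i _ => hμ0 i) ⟨x, by simp, hx⟩
    rw [hnum, mul_div_assoc, div_self hpos.ne', mul_one] at hc
    exact hc
end

section
/- If f is strictly monotonic with respect to η_D and f is calibrated, then f equals η_D on the support of D. (Forward direction: from strict monotonicity, on each level set S = {x : f(x) = f(x')} the regression function η_D is constant, hence the conditional label expectation on S equals η_D(x'); calibration then forces f(x') = η_D(x').) -/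
open Finset

theorem stmt6 {n : ℕ} (μ η f : Fin n → ℝ)
    (hμ0 : ∀ x, 0 ≤ μ x) (hμ1 : (∑ x, μ x) = 1)
    (hη : ∀ x, η x ∈ Set.Icc (0:ℝ) 1)
    (hmono : StrictMonoWrt μ η f) (hcal : Calibrated μ η f) :
    ∀ x, 0 < μ x → f x = η x := by
  intro x hx
  have hcal' := hcal x hx
  have hnum : ∑ x' ∈ univ.filter (fun x' => f x' = f x), μ x' * η x' =
      ∑ x' ∈ univ.filter (fun x' => f x' = f x), μ x' * η x := by
    apply Finset.sum_congr rfl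
    intro x' hx'
    simp only [Finset.mem_filter] at hx'
    rcases eq_or_lt_of_le (hμ0 x') with h0 | h0
    · rw [← h0]; ring
    · have := (hmono x' x h0 hx).2 (by rw [hx'.2]; ring)
      rw [this]
  have hmass : 0 < lmass μ f (f x) := by
    unfold lmass
    apply Finset.sum_pos'
    · intro i _; exact hμ0 i
    · exact ⟨x, by simp, hx⟩
  rw [hcal']
  unfold lavg
  rw [hnum, ← Finset.sum_mul]
  show (lmass μ f (f x)) * η x / lmass μ f (f x) = η x
  field_simp
end

section
/- Cell merging with score averaging never increases the L_p expected calibration error: let f be a predictor, r₁, r₂ in its effective range, and let g be the (r₁,r₂)-cell merge of f with merged value r = (r₁·Pr[f=r₁] + r₂·Pr[f=r₂]) / (Pr[f=r₁] + Pr[f=r₂]). Then CE_{p,D}(g) ≤ CE_{p,D}(f) for every integer p ≥ 1, where CE_{p,D}(h) = (E_{(x,y)~D}[ |h(x) − E[y' | h(x')=h(x)]|^p ])^{1/p}. -/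
open Finset

/-- Sums that agree on every fiber of `f` agree on any `f`-measurable set. -/
private lemma fiber_pred_sum {n : ℕ} (f : Fin n → ℝ) (P : ℝ → Prop) [DecidablePred P]
    (u w : Fin n → ℝ)
    (h : ∀ v : ℝ, ∑ x ∈ univ.filter (fun x => f x = v), u x
        = ∑ x ∈ univ.filter (fun x => f x = v), w x) :
    ∑ x ∈ univ.filter (fun x => P (f x)), u x
      = ∑ x ∈ univ.filter (fun x => P (f x)), w x := by
  have key : ∀ (u : Fin n → ℝ),
      ∑ x ∈ univ.filter (fun x => P (f x)), u x
        = ∑ v ∈ univ.image f,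
            (if P v then ∑ x ∈ univ.filter (fun x => f x = v), u x else 0) := by
    intro u
    rw [Finset.sum_filter]
    rw [← Finset.sum_fiberwise_of_maps_to (g := f) (t := univ.image f)
      (fun x _ => Finset.mem_image_of_mem f (mem_univ x))]
    refine Finset.sum_congr rfl (fun v _ => ?_)
    have : ∀ x ∈ univ.filter (fun x => f x = v),
        (if P (f x) then u x else 0) = (if P v then u x else 0) := by
      intro x hx
      have : f x = v := (Finset.mem_filter.mp hx).2
      rw [this]
    rw [Finset.sum_congr rfl this]
    split_ifs with hv
    · rfl
    · exact Finset.sum_const_zero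
  rw [key u, key w]
  exact Finset.sum_congr rfl (fun v _ => by rw [h v])

private lemma cell_lavg {n : ℕ} (μ η f : Fin n → ℝ) (hμ0 : ∀ x, 0 ≤ μ x) (v : ℝ) :
    ∑ x ∈ univ.filter (fun x => f x = v), μ x * lavg μ η f (f x)
      = ∑ x ∈ univ.filter (fun x => f x = v), μ x * η x := by
  have h1 : ∑ x ∈ univ.filter (fun x => f x = v), μ x * lavg μ η f (f x)
      = (∑ x ∈ univ.filter (fun x => f x = v), μ x) * lavg μ η f v := by
    rw [Finset.sum_mul]
    refine Finset.sum_congr rfl (fun x hx => ?_)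
    rw [(Finset.mem_filter.mp hx).2]
  by_cases hm : lmass μ f v = 0
  · have hz : ∀ x ∈ univ.filter (fun x => f x = v), μ x = 0 := by
      intro x hx
      exact (Finset.sum_eq_zero_iff_of_nonneg (fun i _ => hμ0 i)).mp hm x hx
    rw [h1]
    have : (∑ x ∈ univ.filter (fun x => f x = v), μ x) = 0 := hm
    rw [this, zero_mul]
    exact (Finset.sum_eq_zero (fun x hx => by rw [hz x hx, zero_mul])).symm
  · rw [h1]
    show lmass μ f v * lavg μ η f v = _
    rw [lavg, mul_div_cancel₀ _ hm]

private lemma lmass_pos {n : ℕ} (μ f : Fin n → ℝ) (hμ0 : ∀ x, 0 ≤ μ x) {v : ℝ}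
    (h : ∃ x, 0 < μ x ∧ f x = v) : 0 < lmass μ f v := by
  obtain ⟨x₀, hx₀, hfx₀⟩ := h
  refine lt_of_lt_of_le hx₀ (Finset.single_le_sum (fun i _ => hμ0 i) ?_)
  simp [hfx₀]

theorem stmt9 {n : ℕ} (μ η f g : Fin n → ℝ)
    (hμ0 : ∀ x, 0 ≤ μ x) (hμ1 : (∑ x, μ x) = 1)
    (hη : ∀ x, η x ∈ Set.Icc (0:ℝ) 1)
    (r₁ r₂ : ℝ)
    (hr₁ : ∃ x, 0 < μ x ∧ f x = r₁) (hr₂ : ∃ x, 0 < μ x ∧ f x = r₂)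
    (hg : ∀ x, g x =
      if f x = r₁ ∨ f x = r₂ then
        (r₁ * lmass μ f r₁ + r₂ * lmass μ f r₂) / (lmass μ f r₁ + lmass μ f r₂)
      else f x)
    (p : ℕ) (hp : 1 ≤ p) :
    (cepPow p μ η g) ^ ((1:ℝ) / p) ≤ (cepPow p μ η f) ^ ((1:ℝ) / p) := by
  set r : ℝ := (r₁ * lmass μ f r₁ + r₂ * lmass μ f r₂) / (lmass μ f r₁ + lmass μ f r₂) with hr
  have hm₁ : 0 < lmass μ f r₁ := lmass_pos μ f hμ0 hr₁
  have hm₂ : 0 < lmass μ f r₂ := lmass_pos μ f hμ0 hr₂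
  have hm12 : (0:ℝ) < lmass μ f r₁ + lmass μ f r₂ := by linarith
  -- the merged-mean identity on the union of the two cells
  have hD : ∑ x ∈ univ.filter (fun x => f x = r₁ ∨ f x = r₂), μ x * (r - f x) = 0 := by
    have cell_const : ∀ v : ℝ, ∑ x ∈ univ.filter (fun x => f x = v), μ x * (r - f x)
        = (r - v) * lmass μ f v := by
      intro v
      rw [lmass, Finset.mul_sum]
      refine Finset.sum_congr rfl (fun x hx => ?_)
      rw [(Finset.mem_filter.mp hx).2, mul_comm]
    by_cases h12 : r₁ = r₂
    · subst h12
      have hflt : (univ.filter (fun x => f x = r₁ ∨ f x = r₁)) = univ.filter (fun x => f x = r₁) := by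
        simp
      rw [hflt, cell_const r₁]
      have hrr : r = r₁ := by
        rw [hr, div_eq_iff (ne_of_gt hm12)]; ring
      rw [hrr]; ring
    · have hfo : (univ.filter (fun x => f x = r₁ ∨ f x = r₂))
          = univ.filter (fun x => f x = r₁) ∪ univ.filter (fun x => f x = r₂) := by
        rw [Finset.filter_or]
      have hdisj : Disjoint (univ.filter (fun x => f x = r₁)) (univ.filter (fun x => f x = r₂)) := by
        rw [Finset.disjoint_filter]
        intro x _ h1 h2
        exact h12 (h1.symm.trans h2)
      rw [hfo, Finset.sum_union hdisj, cell_const r₁, cell_const r₂]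
      have hmc : (r₁ * lmass μ f r₁ + r₂ * lmass μ f r₂) / (lmass μ f r₁ + lmass μ f r₂)
          * (lmass μ f r₁ + lmass μ f r₂) = r₁ * lmass μ f r₁ + r₂ * lmass μ f r₂ :=
        div_mul_cancel₀ _ (ne_of_gt hm12)
      rw [hr]
      linear_combination hmc
  -- abbreviations
  set A : Fin n → ℝ := fun x => f x - lavg μ η f (f x) with hA
  set B : Fin n → ℝ := fun x => g x - lavg μ η g (g x) with hB
  have hmg_pos : ∀ x, 0 < μ x → 0 < lmass μ g (g x) := by
    intro x hx
    exact lmass_pos μ g hμ0 ⟨x, hx, rfl⟩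
  -- numerator identity: on each g-cell, the μ-weighted sum of A equals B * mass
  have hBnum : ∀ x, ∑ x' ∈ univ.filter (fun x' => g x' = g x), μ x' * A x'
      = B x * lmass μ g (g x) := by
    intro x
    set c := g x with hc
    set C := univ.filter (fun x' => g x' = c) with hC
    have hCf : C = univ.filter (fun x' =>
        (if f x' = r₁ ∨ f x' = r₂ then r else f x') = c) := by
      rw [hC]
      apply Finset.filter_congr
      intro x' _
      rw [hg x']
    have E1 : ∑ x' ∈ C, μ x' * lavg μ η f (f x') = ∑ x' ∈ C, μ x' * η x' := by
      rw [hCf]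
      exact fiber_pred_sum f (fun v => (if v = r₁ ∨ v = r₂ then r else v) = c)
        _ _ (cell_lavg μ η f hμ0)
    have E2 : ∑ x' ∈ C, μ x' * f x' = ∑ x' ∈ C, μ x' * g x' := by
      have step : ∑ x' ∈ C, (μ x' * g x' - μ x' * f x')
          = ∑ x' ∈ C, (if f x' = r₁ ∨ f x' = r₂ then μ x' * (r - f x') else 0) := by
        refine Finset.sum_congr rfl (fun x' _ => ?_)
        by_cases h : f x' = r₁ ∨ f x' = r₂
        · rw [if_pos h, hg x', if_pos h]; ring
        · rw [if_neg h, hg x', if_neg h]; ring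
      have step2 : ∑ x' ∈ C, (if f x' = r₁ ∨ f x' = r₂ then μ x' * (r - f x') else 0) = 0 := by
        by_cases hcr : c = r
        · have hsub : ∀ x' ∈ (univ : Finset (Fin n)), x' ∉ C →
              (if f x' = r₁ ∨ f x' = r₂ then μ x' * (r - f x') else 0) = 0 := by
            intro x' _ hx'
            rw [if_neg]
            intro h
            apply hx'
            rw [hC, Finset.mem_filter]
            refine ⟨mem_univ _, ?_⟩
            rw [hg x', if_pos h, hcr]
          rw [Finset.sum_subset (Finset.subset_univ C) hsub, ← Finset.sum_filter]
          exact hD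
        · refine Finset.sum_eq_zero (fun x' hx' => ?_)
          rw [if_neg]
          intro h
          have hgr : g x' = r := by rw [hg x', if_pos h]
          apply hcr
          rw [Finset.mem_filter] at hx'
          rw [← hx'.2, hgr]
      have h3 := step.trans step2
      rw [Finset.sum_sub_distrib] at h3
      linarith
    have E3 : ∑ x' ∈ C, μ x' * g x' = c * lmass μ g c := by
      rw [lmass, Finset.mul_sum]
      refine Finset.sum_congr rfl (fun x' hx' => ?_)
      rw [Finset.mem_filter] at hx'
      rw [hx'.2, mul_comm]
    have expand : ∑ x' ∈ C, μ x' * A x'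
        = ∑ x' ∈ C, μ x' * f x' - ∑ x' ∈ C, μ x' * lavg μ η f (f x') := by
      rw [← Finset.sum_sub_distrib]
      refine Finset.sum_congr rfl (fun x' _ => ?_)
      simp only [hA]
      ring
    rw [expand, E1, E2, E3]
    simp only [hB]
    by_cases hm : lmass μ g c = 0
    · have hz : ∀ x' ∈ C, μ x' = 0 := by
        intro x' hx'
        exact (Finset.sum_eq_zero_iff_of_nonneg (fun i _ => hμ0 i)).mp hm x' hx'
      have hSz : ∑ x' ∈ C, μ x' * η x' = 0 :=
        Finset.sum_eq_zero (fun x' hx' => by rw [hz x' hx', zero_mul])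
      rw [hm, hSz]
      ring
    · have hlavg : lavg μ η g c = (∑ x' ∈ C, μ x' * η x') / lmass μ g c := rfl
      rw [hlavg, sub_mul, div_mul_cancel₀ _ hm]
  -- Jensen per point
  have jensen : ∀ x, 0 < μ x →
      μ x * |B x| ^ p ≤ μ x * ((∑ x' ∈ univ.filter (fun x' => g x' = g x), μ x' * |A x'| ^ p)
        / lmass μ g (g x)) := by
    intro x hx
    have hmpos : 0 < lmass μ g (g x) := hmg_pos x hx
    set m := lmass μ g (g x) with hm
    set C := univ.filter (fun x' => g x' = g x) with hC
    have hBval : B x = (∑ x' ∈ C, μ x' * A x') / m := by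
      rw [hBnum x, eq_comm, div_eq_iff (ne_of_gt hmpos)]
    have habs : |B x| ≤ ∑ x' ∈ C, (μ x' / m) * |A x'| := by
      rw [hBval, abs_div, abs_of_pos hmpos, div_le_iff₀ hmpos]
      calc |∑ x' ∈ C, μ x' * A x'| ≤ ∑ x' ∈ C, |μ x' * A x'| := Finset.abs_sum_le_sum_abs _ _
        _ = ∑ x' ∈ C, μ x' * |A x'| := Finset.sum_congr rfl (fun x' _ => by
              rw [abs_mul, abs_of_nonneg (hμ0 x')])
        _ = (∑ x' ∈ C, (μ x' / m) * |A x'|) * m := by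
              rw [Finset.sum_mul]
              refine Finset.sum_congr rfl (fun x' _ => ?_)
              field_simp
    have hsum1 : ∑ x' ∈ C, μ x' / m = 1 := by
      rw [← Finset.sum_div]
      have hCm : ∑ x' ∈ C, μ x' = m := rfl
      rw [hCm, div_self (ne_of_gt hmpos)]
    have hpow : |B x| ^ p ≤ ∑ x' ∈ C, (μ x' / m) * |A x'| ^ p := by
      calc |B x| ^ p ≤ (∑ x' ∈ C, (μ x' / m) * |A x'|) ^ p :=
            pow_le_pow_left₀ (abs_nonneg _) habs p
        _ ≤ ∑ x' ∈ C, (μ x' / m) * |A x'| ^ p :=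
            Real.pow_arith_mean_le_arith_mean_pow C _ _
              (fun i _ => div_nonneg (hμ0 i) (le_of_lt hmpos)) hsum1
              (fun i _ => abs_nonneg _) p
    refine mul_le_mul_of_nonneg_left ?_ (hμ0 x)
    calc |B x| ^ p ≤ ∑ x' ∈ C, (μ x' / m) * |A x'| ^ p := hpow
      _ = (∑ x' ∈ C, μ x' * |A x'| ^ p) / m := by
          rw [Finset.sum_div]
          refine Finset.sum_congr rfl (fun x' _ => ?_)
          rw [div_mul_eq_mul_div]
  -- the main inequality on p-th powers
  have main : cepPow p μ η g ≤ cepPow p μ η f := by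
    have step1 : cepPow p μ η g ≤
        ∑ x, μ x * ((∑ x' ∈ univ.filter (fun x' => g x' = g x), μ x' * |A x'| ^ p)
          / lmass μ g (g x)) := by
      rw [cepPow]
      refine Finset.sum_le_sum (fun x _ => ?_)
      rcases lt_or_eq_of_le (hμ0 x) with hx | hx
      · exact jensen x hx
      · rw [← hx]; simp
    have T_eq : ∑ x, μ x * ((∑ x' ∈ univ.filter (fun x' => g x' = g x), μ x' * |A x'| ^ p)
          / lmass μ g (g x))
        = ∑ x : Fin n, ∑ x' : Fin n,
            (if g x' = g x then μ x * (μ x' * |A x'| ^ p) / lmass μ g (g x) else 0) := by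
      refine Finset.sum_congr rfl (fun x _ => ?_)
      rw [Finset.sum_div, Finset.mul_sum]
      rw [Finset.sum_congr rfl (fun x' _ => (mul_div_assoc (μ x) (μ x' * |A x'| ^ p)
        (lmass μ g (g x))).symm)]
      rw [Finset.sum_filter]
    have inner_le : ∀ x' : Fin n, ∑ x : Fin n,
        (if g x' = g x then μ x * (μ x' * |A x'| ^ p) / lmass μ g (g x) else 0)
          ≤ μ x' * |A x'| ^ p := by
      intro x'
      set M' := lmass μ g (g x') with hM'
      have h1 : ∀ x : Fin n, (if g x' = g x then μ x * (μ x' * |A x'| ^ p) / lmass μ g (g x) else 0)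
          = (μ x' * |A x'| ^ p) * (if g x = g x' then μ x / M' else 0) := by
        intro x
        by_cases h : g x' = g x
        · rw [if_pos h, if_pos h.symm, ← h, ← hM']
          ring
        · rw [if_neg h, if_neg (fun hh => h hh.symm), mul_zero]
      rw [Finset.sum_congr rfl (fun x _ => h1 x), ← Finset.mul_sum]
      have h2 : ∑ x : Fin n, (if g x = g x' then μ x / M' else 0) = M' / M' := by
        have hsplit : ∀ x : Fin n, (if g x = g x' then μ x / M' else 0)
            = (if g x = g x' then μ x else 0) / M' := by
          intro x
          split_ifs
          · rfl
          · rw [zero_div]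
        rw [Finset.sum_congr rfl (fun x _ => hsplit x), ← Finset.sum_div, ← Finset.sum_filter]
        rfl
      rw [h2]
      have hfac : M' / M' ≤ 1 := by
        rcases eq_or_ne M' 0 with h | h
        · rw [h, div_zero]; norm_num
        · rw [div_self h]
      calc (μ x' * |A x'| ^ p) * (M' / M') ≤ (μ x' * |A x'| ^ p) * 1 :=
            mul_le_mul_of_nonneg_left hfac (mul_nonneg (hμ0 x') (pow_nonneg (abs_nonneg _) p))
        _ = μ x' * |A x'| ^ p := mul_one _
    calc cepPow p μ η g
        ≤ ∑ x, μ x * ((∑ x' ∈ univ.filter (fun x' => g x' = g x), μ x' * |A x'| ^ p)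
            / lmass μ g (g x)) := step1
      _ = ∑ x : Fin n, ∑ x' : Fin n,
            (if g x' = g x then μ x * (μ x' * |A x'| ^ p) / lmass μ g (g x) else 0) := T_eq
      _ = ∑ x' : Fin n, ∑ x : Fin n,
            (if g x' = g x then μ x * (μ x' * |A x'| ^ p) / lmass μ g (g x) else 0) :=
          Finset.sum_comm
      _ ≤ ∑ x' : Fin n, μ x' * |A x'| ^ p := Finset.sum_le_sum (fun x' _ => inner_le x')
      _ = cepPow p μ η f := by
          rw [cepPow]
  have h0g : 0 ≤ cepPow p μ η g := by
    rw [cepPow]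
    exact Finset.sum_nonneg (fun x _ => mul_nonneg (hμ0 x) (pow_nonneg (abs_nonneg _) p))
  exact Real.rpow_le_rpow h0g main (by positivity)
end
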